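/- arXiv:2507.17981 — 11 statements merged into one kernel-verified Lean document; each statement's English description precedes it below -/
import Mathlib

section
/- Every candidate in the k-approval veto core satisfies the k-mutual minority criterion. That is, if a candidate c is not k-blocked by any coalition, then there is no subset S of candidates with c ∈ S and a coalition T of voters such that every voter in T ranks all candidates outside S above all candidates in S, and |T|/n > |S|/k. -/
/-- Voter `v` prefers candidate `c` over `c'` (lower rank is better). -/
def Prefers {V C : Type*} {m : ℕ} (rank : V → C ≃ Fin m) (v : V) (c c' : C) : Prop :=
  rank v c < rank v c'

/-- The `k`-approval score of candidate `c`. -/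
def apv {V C : Type*} [Fintype V] {m : ℕ} (rank : V → C ≃ Fin m) (k : ℕ) (c : C) : ℕ :=
  (Finset.univ.filter fun v => ((rank v c : Fin m) : ℕ) < k).card

/-- Coalition `T` `k`-blocks candidate `w` with witness set `S`: every voter in `T`
prefers every candidate of `S` over `w`, and `|T|/n > 1 - apv_k(S)/(n*k)`. -/
def KBlocks {V C : Type*} [Fintype V] {m : ℕ} (rank : V → C ≃ Fin m) (k : ℕ)
    (T : Finset V) (S : Finset C) (w : C) : Prop :=
  (∀ v ∈ T, ∀ c ∈ S, Prefers rank v c w) ∧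
  (T.card : ℚ) / (Fintype.card V) >
    1 - (∑ c ∈ S, (apv rank k c : ℚ)) / ((Fintype.card V) * k)

/-- Coalition `T` solidly vetoes `S`: every voter in `T` prefers every candidate
outside `S` over every candidate in `S`. -/
def SolidlyVetoes {V C : Type*} {m : ℕ} (rank : V → C ≃ Fin m)
    (T : Finset V) (S : Finset C) : Prop :=
  ∀ v ∈ T, ∀ c' ∉ S, ∀ c ∈ S, Prefers rank v c' c

/-! If `T` solidly vetoes `S ∋ c`, then `T` blocks `c` with witness `Sᶜ`. Every voter approves
exactly `k` candidates, so the total `k`-approval score is `n k`, while each candidate of `S` has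
score at most `n`; hence `apv_k(Sᶜ) ≥ n k - n |S|`, i.e. `1 - apv_k(Sᶜ)/(n k) ≤ |S|/k < |T|/n`. -/

open Finset

theorem Equiv.card_filter_val_lt {α : Type*} [Fintype α] {m k : ℕ} (e : α ≃ Fin m) (hkm : k ≤ m) :
    #{a | (e a : ℕ) < k} = k := by
  rw [← card_map e.toEmbedding, map_filter, map_univ_equiv]
  simpa [hkm] using Fin.card_filter_val_lt (n := m) (m := k)

section Approval

variable {V C : Type*} [Fintype V] {m : ℕ} (rank : V → C ≃ Fin m) {k : ℕ}

theorem apv_le_card (c : C) : apv rank k c ≤ Fintype.card V :=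
  card_filter_le _ _

theorem sum_apv_univ [Fintype C] (hkm : k ≤ m) : ∑ c, apv rank k c = Fintype.card V * k := by
  simp only [apv, card_filter]
  rw [sum_comm]
  simp only [← card_filter, (rank _).card_filter_val_lt hkm, sum_const, card_univ, smul_eq_mul]

theorem card_mul_le_sum_apv_compl_add [Fintype C] [DecidableEq C] (hkm : k ≤ m) (S : Finset C) :
    Fintype.card V * k ≤ ∑ c ∈ Sᶜ, apv rank k c + #S * Fintype.card V := by
  rw [← sum_apv_univ rank hkm, ← sum_add_sum_compl S, add_comm]
  gcongr
  exact sum_le_card_nsmul _ _ _ fun c _ => apv_le_card rank c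

variable {rank}

theorem SolidlyVetoes.kBlocks_compl [Fintype C] [DecidableEq C] {T : Finset V} {S : Finset C}
    {c : C} (hveto : SolidlyVetoes rank T S) (hc : c ∈ S) (hk : 0 < k) (hkm : k ≤ m)
    (hn : 0 < Fintype.card V) (hT : (#T : ℚ) / Fintype.card V > #S / k) :
    KBlocks rank k T Sᶜ c := by
  refine ⟨fun v hv c' hc' => hveto v hv c' (mem_compl.mp hc') c hc, ?_⟩
  have hA : (Fintype.card V * k : ℚ) ≤ ∑ c ∈ Sᶜ, (apv rank k c : ℚ) + #S * Fintype.card V := by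
    exact_mod_cast card_mul_le_sum_apv_compl_add rank hkm S
  have hn : (0 : ℚ) < Fintype.card V := by exact_mod_cast hn
  have hk : (0 : ℚ) < k := by exact_mod_cast hk
  set n : ℚ := (Fintype.card V : ℚ)
  set A : ℚ := ∑ c ∈ Sᶜ, (apv rank k c : ℚ)
  calc 1 - A / (n * k) = (n * k - A) / (n * k) := by field_simp
    _ ≤ #S * n / (n * k) := by gcongr; linarith
    _ = #S / k := by field_simp
    _ < #T / n := hT

end Approval

/-- Every candidate in the `k`-approval veto core satisfies the `k`-mutual minority
criterion. -/
theorem core_satisfies_mutual_minority {V C : Type*} [Fintype V] {m : ℕ}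
    (rank : V → C ≃ Fin m) (k : ℕ) (hk : 1 ≤ k) (hkm : k ≤ m)
    (hn : 0 < Fintype.card V) (c : C)
    (hcore : ∀ (T : Finset V) (S : Finset C), ¬ KBlocks rank k T S c) :
    ¬ ∃ (S : Finset C) (T : Finset V), c ∈ S ∧ SolidlyVetoes rank T S ∧
      (T.card : ℚ) / (Fintype.card V) > (S.card : ℚ) / k := by
  rintro ⟨S, T, hcS, hveto, hT⟩
  obtain ⟨v⟩ := Fintype.card_pos_iff.mp hn
  let := Fintype.ofEquiv _ (rank v).symm
  classical
  exact hcore T Sᶜ (hveto.kBlocks_compl hcS hk hkm hn hT)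
end

section
/- The (m−1)-approval veto core is contained in the m-approval veto core: if the (m−1)-domination graph of a candidate w has a perfect matching, then so does the m-domination graph of w. -/
/-- The `k`-domination graph of `w` has a perfect matching: a bijection between the
`k` copies of the voters and the copies of the candidates (`apv_k(c)` copies of each
candidate `c`) matching each (copy of a) voter `v` to a (copy of a) candidate that `v`
ranks weakly below `w`. -/
def HasPerfectMatching {V C : Type*} [Fintype V] {m : ℕ} (rank : V → C ≃ Fin m)
    (k : ℕ) (w : C) : Prop :=
  ∃ f : (V × Fin k) ≃ (Σ c : C, Fin (apv rank k c)),
    ∀ p : V × Fin k, rank p.1 w ≤ rank p.1 (f p).1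

/-!
Passing from `k` to `k + 1` approvals adds one copy of every voter and, for each voter `v`,
one copy of `v`'s `(k+1)`-th choice. Hence a perfect matching of the `k`-domination graph
extends to one of the `(k+1)`-domination graph by matching the new copy of `v` to `v`'s
`(k+1)`-th choice, which is allowed as soon as `w` lies in every voter's top `k + 1`.
For `k = m - 1` this choice is the voter's bottom candidate, so the condition always holds.
-/

open Finset

section

variable {V C : Type*}

def prodFinSuccEquiv (k : ℕ) : V × Fin (k + 1) ≃ V × Fin k ⊕ V :=
  ((Equiv.refl V).prodCongr finSumFinEquiv.symm).trans <|
    (Equiv.prodSumDistrib V (Fin k) (Fin 1)).trans <|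
      (Equiv.refl _).sumCongr (Equiv.prodUnique V (Fin 1))

theorem sumElim_prodFinSuccEquiv (k : ℕ) (p : V × Fin (k + 1)) :
    Sum.elim Prod.fst id (prodFinSuccEquiv k p) = p.1 := by
  obtain ⟨v, i⟩ := p
  simp only [prodFinSuccEquiv, Equiv.trans_apply, Equiv.prodCongr_apply, Equiv.coe_refl, Prod.map]
  rcases finSumFinEquiv.symm i with j | j <;> rfl

variable [Fintype V] {m : ℕ} (rank : V → C ≃ Fin m)

theorem apv_succ (k : ℕ) (c : C) :
    apv rank (k + 1) c = apv rank k c + #{v | (rank v c : ℕ) = k} := by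
  classical
  unfold apv
  rw [← card_union_of_disjoint (disjoint_filter.2 fun _ _ h => h.ne), ← filter_or]
  simp only [Nat.lt_succ_iff_lt_or_eq]

noncomputable def votersEquivSigma {k : ℕ} (hk : k < m) :
    V ≃ Σ c : C, Fin #{v | (rank v c : ℕ) = k} := by
  classical
  exact (Equiv.sigmaFiberEquiv fun v => (rank v).symm ⟨k, hk⟩).symm.trans
    (Equiv.sigmaCongrRight fun c => Fintype.equivFinOfCardEq <| by
      rw [Fintype.card_subtype]
      congr 1
      ext v
      simp only [mem_filter_univ, Equiv.symm_apply_eq, Fin.ext_iff]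
      exact eq_comm)

theorem votersEquivSigma_fst {k : ℕ} (hk : k < m) (v : V) :
    (votersEquivSigma rank hk v).1 = (rank v).symm ⟨k, hk⟩ := rfl

def sigmaApvSuccEquiv (k : ℕ) :
    (Σ c : C, Fin (apv rank k c)) ⊕ (Σ c : C, Fin #{v | (rank v c : ℕ) = k}) ≃
      Σ c : C, Fin (apv rank (k + 1) c) :=
  (Equiv.sigmaSumDistrib _ _).symm.trans <|
    Equiv.sigmaCongrRight fun c => finSumFinEquiv.trans (finCongr (apv_succ rank k c).symm)

theorem sigmaApvSuccEquiv_fst (k : ℕ)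
    (x : (Σ c : C, Fin (apv rank k c)) ⊕ (Σ c : C, Fin #{v | (rank v c : ℕ) = k})) :
    (sigmaApvSuccEquiv rank k x).1 = Sum.elim Sigma.fst Sigma.fst x := by
  rcases x with x | x <;> rfl

theorem HasPerfectMatching.succ {k : ℕ} (hk : k < m) {w : C} (h : HasPerfectMatching rank k w)
    (hw : ∀ v, rank v w ≤ ⟨k, hk⟩) : HasPerfectMatching rank (k + 1) w := by
  obtain ⟨f, hf⟩ := h
  refine ⟨(prodFinSuccEquiv k).trans <|
    (f.sumCongr (votersEquivSigma rank hk)).trans (sigmaApvSuccEquiv rank k), fun p => ?_⟩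
  rw [← sumElim_prodFinSuccEquiv k p]
  simp only [Equiv.trans_apply, sigmaApvSuccEquiv_fst]
  rcases prodFinSuccEquiv k p with q | v
  · exact hf q
  · show rank v w ≤ rank v (votersEquivSigma rank hk v).1
    rw [votersEquivSigma_fst, Equiv.apply_symm_apply]
    exact hw v

end

theorem core_m_sub_one_subset_core_m_general {V C : Type*} [Fintype V] {m : ℕ}
    (rank : V → C ≃ Fin m) (w : C)
    (h : HasPerfectMatching rank (m - 1) w) :
    HasPerfectMatching rank m w := by
  obtain _ | n := m
  · exact h
  · exact h.succ rank n.lt_succ_self fun v => Fin.le_last _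

/-- The `(m-1)`-approval veto core is contained in the `m`-approval veto core:
if the `(m-1)`-domination graph of `w` has a perfect matching, so does the
`m`-domination graph of `w`. -/
theorem core_m_sub_one_subset_core_m {V C : Type*} [Fintype V] {m : ℕ}
    (hm : 1 ≤ m) (rank : V → C ≃ Fin m) (w : C)
    (h : HasPerfectMatching rank (m - 1) w) :
    HasPerfectMatching rank m w :=
  core_m_sub_one_subset_core_m_general rank w h
end

section
/- Every candidate in the m-approval veto core (the proportional veto core) has utilitarian metric distortion at most 2m−1: if w is not m-blocked by any coalition, then for every metric d consistent with the rankings and every candidate c*, Σ_v d(v,w) ≤ (2m−1) · Σ_v d(v,c*). -/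
/-!
Let `T` be the voters who prefer `c*` to `w`. Since `T` does not `m`-block `w` with witness
`{c*}`, at least `n/m` voters weakly prefer `w` to `c*`. For each such voter `v` we have
`d(c*, w) ≤ d(v, c*) + d(v, w) ≤ 2 d(v, c*)`, so summing over them bounds `d(c*, w)` by
`2m/n · Σ_v d(v, c*)`; the remaining voters pay at most `d(v, c*) + d(c*, w)` for `w`.
-/

open Finset

/-- Coalition `T` `m`-blocks candidate `w` with witness set `S` (using
`apv_m(S) = n·|S|`): every voter in `T` prefers all of `S` over `w` and
`|T|/n > 1 - |S|/m`. -/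
def MBlocks {V C : Type*} [Fintype V] {m : ℕ} (rank : V → C ≃ Fin m)
    (T : Finset V) (S : Finset C) (w : C) : Prop :=
  (∀ v ∈ T, ∀ c ∈ S, Prefers rank v c w) ∧
  (T.card : ℚ) / (Fintype.card V) > 1 - (S.card : ℚ) / m

/-- The known bound `Σ b ≤ (2n/|Tᶜ| - 1) Σ a`, for `a i = d(i, c*)`, `b i = d(i, w)`,
`D = d(c*, w)`. -/
theorem card_sub_mul_sum_le {ι : Type*} [Fintype ι] (T : Finset ι) (a b : ι → ℝ) (D : ℝ)
    (hb : ∀ i, b i ≤ a i + D) (hD : ∀ i, D ≤ a i + b i) (hT : ∀ i ∉ T, b i ≤ a i) :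
    ((Fintype.card ι : ℝ) - #T) * ∑ i, b i ≤ (Fintype.card ι + #T) * ∑ i, a i := by
  classical
  have ha : ∀ i, 0 ≤ a i := fun i => by linarith [hb i, hD i]
  have hTcard : (#T : ℝ) ≤ Fintype.card ι := by exact_mod_cast card_le_univ T
  have hD_le : ((Fintype.card ι : ℝ) - #T) * D ≤ 2 * ∑ i, a i :=
    calc ((Fintype.card ι : ℝ) - #T) * D = ∑ i ∈ Tᶜ, D := by
          rw [sum_const, card_compl, nsmul_eq_mul, Nat.cast_sub (card_le_univ T)]
      _ ≤ ∑ i ∈ Tᶜ, 2 * a i :=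
          sum_le_sum fun i hi => by linarith [hD i, hT i (mem_compl.mp hi)]
      _ ≤ 2 * ∑ i, a i := by
          rw [← mul_sum]; exact mul_le_mul_of_nonneg_left (sum_le_univ_sum_of_nonneg ha) zero_le_two
  have hsum : ∑ i, b i ≤ ∑ i, a i + #T * D :=
    calc ∑ i, b i = ∑ i ∈ Tᶜ, b i + ∑ i ∈ T, b i := (sum_compl_add_sum T b).symm
      _ ≤ ∑ i ∈ Tᶜ, a i + ∑ i ∈ T, (a i + D) := by
          gcongr with i hi i
          · exact hT i (mem_compl.mp hi)
          · exact hb i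
      _ = ∑ i, a i + #T * D := by
          rw [sum_add_distrib, sum_const, nsmul_eq_mul, ← add_assoc, sum_compl_add_sum]
  nlinarith [mul_le_mul_of_nonneg_left hsum (sub_nonneg.mpr hTcard),
    mul_le_mul_of_nonneg_left hD_le (Nat.cast_nonneg (α := ℝ) #T)]

theorem sum_le_two_mul_sub_one_mul_sum {ι : Type*} [Fintype ι] (T : Finset ι) (a b : ι → ℝ)
    (D : ℝ) (hb : ∀ i, b i ≤ a i + D) (hD : ∀ i, D ≤ a i + b i) (hT : ∀ i ∉ T, b i ≤ a i)
    (m : ℝ) (hι : 0 < Fintype.card ι) (hcard : (Fintype.card ι : ℝ) ≤ m * (Fintype.card ι - #T)) :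
    ∑ i, b i ≤ (2 * m - 1) * ∑ i, a i := by
  have ha : 0 ≤ ∑ i, a i := sum_nonneg fun i _ => by linarith [hb i, hD i]
  have hι' : (0 : ℝ) < Fintype.card ι := by exact_mod_cast hι
  have hTcard : (#T : ℝ) ≤ Fintype.card ι := by exact_mod_cast card_le_univ T
  have hpos : (0 : ℝ) < Fintype.card ι - #T := by
    rcases (sub_nonneg.mpr hTcard).lt_or_eq with h | h
    · exact h
    · rw [← h, mul_zero] at hcard; linarith
  refine le_of_mul_le_mul_left ?_ hpos
  calc ((Fintype.card ι : ℝ) - #T) * ∑ i, b i ≤ (Fintype.card ι + #T) * ∑ i, a i :=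
        card_sub_mul_sum_le T a b D hb hD hT
    _ ≤ ((Fintype.card ι : ℝ) - #T) * ((2 * m - 1) * ∑ i, a i) := by
        rw [← mul_assoc]; gcongr; linarith

theorem card_mul_add_le_of_not_mBlocks {V C : Type*} [Fintype V] {m : ℕ}
    (rank : V → C ≃ Fin m) (hn : 0 < Fintype.card V) (hm : 0 < m) {T : Finset V} {S : Finset C}
    {w : C} (hT : ∀ v ∈ T, ∀ c ∈ S, Prefers rank v c w) (h : ¬ MBlocks rank T S w) :
    m * #T + Fintype.card V * #S ≤ m * Fintype.card V := by
  have hle : (#T : ℚ) / Fintype.card V ≤ 1 - (#S : ℚ) / m := not_lt.mp fun h' => h ⟨hT, h'⟩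
  have hn' : (0 : ℚ) < Fintype.card V := by exact_mod_cast hn
  have hm' : (0 : ℚ) < m := by exact_mod_cast hm
  field_simp at hle
  have : (m : ℚ) * #T + Fintype.card V * #S ≤ m * Fintype.card V := by linarith
  exact_mod_cast this

theorem dist_le_of_not_prefers {V C : Type*} {m : ℕ} {rank : V → C ≃ Fin m}
    {d : V ⊕ C → V ⊕ C → ℝ}
    (hcons : ∀ (v : V) (c c' : C), Prefers rank v c c' →
      d (Sum.inl v) (Sum.inr c) ≤ d (Sum.inl v) (Sum.inr c'))
    {v : V} {c c' : C} (h : ¬ Prefers rank v c' c) :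
    d (Sum.inl v) (Sum.inr c) ≤ d (Sum.inl v) (Sum.inr c') := by
  rcases (not_lt.mp h).lt_or_eq with hlt | heq
  · exact hcons v c c' hlt
  · rw [(rank v).injective heq]

theorem proportional_core_distortion_general {V C : Type*} [Fintype V] {m : ℕ}
    (rank : V → C ≃ Fin m) (hn : 0 < Fintype.card V) (hm : 1 ≤ m)
    (d : V ⊕ C → V ⊕ C → ℝ)
    (hsymm : ∀ x y, d x y = d y x)
    (htri : ∀ x y z, d x z ≤ d x y + d y z)
    (hcons : ∀ (v : V) (c c' : C), Prefers rank v c c' →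
      d (Sum.inl v) (Sum.inr c) ≤ d (Sum.inl v) (Sum.inr c'))
    (w : C) (hcore : ∀ (T : Finset V) (S : Finset C), ¬ MBlocks rank T S w)
    (cstar : C) :
    ∑ v : V, d (Sum.inl v) (Sum.inr w) ≤
      (2 * (m : ℝ) - 1) * ∑ v : V, d (Sum.inl v) (Sum.inr cstar) := by
  classical
  set T := univ.filter fun v => Prefers rank v cstar w
  have hblock : m * #T + Fintype.card V * 1 ≤ m * Fintype.card V :=
    card_mul_add_le_of_not_mBlocks rank hn hm (S := {cstar})
      (fun v hv c hc => by rw [mem_singleton.mp hc]; exact (mem_filter.mp hv).2) (hcore T _)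
  refine sum_le_two_mul_sub_one_mul_sum T _ _ (d (.inr cstar) (.inr w))
    (fun v => htri _ _ _)
    (fun v => by linarith [htri (.inr cstar) (.inl v) (.inr w), hsymm (.inr cstar) (.inl v)])
    (fun v hv => dist_le_of_not_prefers hcons fun h => hv (mem_filter.mpr ⟨mem_univ v, h⟩))
    m hn ?_
  have : (m : ℝ) * #T + Fintype.card V * 1 ≤ m * Fintype.card V := by exact_mod_cast hblock
  linarith

/-- Every candidate in the `m`-approval veto core (the proportional veto core) has
utilitarian metric distortion at most `2m - 1`. -/
theorem proportional_core_distortion {V C : Type*} [Fintype V] {m : ℕ}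
    (rank : V → C ≃ Fin m) (hn : 0 < Fintype.card V) (hm : 1 ≤ m)
    (d : V ⊕ C → V ⊕ C → ℝ)
    (hrefl : ∀ x, d x x = 0)
    (hsymm : ∀ x y, d x y = d y x)
    (htri : ∀ x y z, d x z ≤ d x y + d y z)
    (hcons : ∀ (v : V) (c c' : C), Prefers rank v c c' →
      d (Sum.inl v) (Sum.inr c) ≤ d (Sum.inl v) (Sum.inr c'))
    (w : C) (hcore : ∀ (T : Finset V) (S : Finset C), ¬ MBlocks rank T S w)
    (cstar : C) :
    ∑ v : V, d (Sum.inl v) (Sum.inr w) ≤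
      (2 * (m : ℝ) - 1) * ∑ v : V, d (Sum.inl v) (Sum.inr cstar) :=
  proportional_core_distortion_general rank hn hm d hsymm htri hcons w hcore cstar
end

section
/- For any two candidates w ≠ c* and any metric d consistent with the voters' rankings, the ratio of total costs satisfies Σ_{v∈V} d(v,w) ≤ (2n/t − 1) · Σ_{v∈V} d(v,c*), where t = |{v ∈ V : v prefers w over c*}| > 0. -/
/-!
Let `S` be the set of the `t` voters who prefer `w` to `c*`, so `d(v,w) ≤ d(v,c*)` for `v ∈ S`.
Then `d(w,c*) ≤ d(w,v) + d(v,c*) ≤ 2 d(v,c*)`, and summing over `S` gives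
`t · d(w,c*) ≤ 2 Σ_v d(v,c*)`. Every other voter satisfies `d(v,w) ≤ d(v,c*) + d(c*,w)`, so
`Σ_v d(v,w) ≤ Σ_v d(v,c*) + (n - t) d(w,c*) ≤ (1 + 2(n - t)/t) Σ_v d(v,c*)`.
-/

open scoped Classical

open Finset

section PseudoMetricFunction

variable {α : Type*} {d : α → α → ℝ}

theorem nonneg_of_triangle (hrefl : ∀ x, d x x = 0) (hsymm : ∀ x y, d x y = d y x)
    (htri : ∀ x y z, d x z ≤ d x y + d y z) (x y : α) : 0 ≤ d x y := by
  have h := htri x y x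
  rw [hrefl, hsymm y x] at h
  linarith

theorem le_two_mul_of_le (hsymm : ∀ x y, d x y = d y x)
    (htri : ∀ x y z, d x z ≤ d x y + d y z) {a b x : α} (hx : d x a ≤ d x b) :
    d a b ≤ 2 * d x b := by
  have h := htri a x b
  rw [hsymm a x] at h
  linarith

variable {ι : Type*} (x : ι → α) (a b : α) (S : Finset ι)

theorem card_mul_le_two_mul_sum (hsymm : ∀ x y, d x y = d y x)
    (htri : ∀ x y z, d x z ≤ d x y + d y z) (hS : ∀ i ∈ S, d (x i) a ≤ d (x i) b) :
    (#S : ℝ) * d a b ≤ 2 * ∑ i ∈ S, d (x i) b := by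
  rw [← nsmul_eq_mul, ← sum_const, mul_sum]
  exact sum_le_sum fun i hi => le_two_mul_of_le hsymm htri (hS i hi)

theorem sum_le_sum_add_card_compl_mul [Fintype ι] (hsymm : ∀ x y, d x y = d y x)
    (htri : ∀ x y z, d x z ≤ d x y + d y z) (hS : ∀ i ∈ S, d (x i) a ≤ d (x i) b) :
    ∑ i, d (x i) a ≤ ∑ i, d (x i) b + (#Sᶜ : ℝ) * d a b := by
  rw [← sum_add_sum_compl S, ← sum_add_sum_compl S fun i => d (x i) b, add_assoc,
    ← nsmul_eq_mul, ← sum_const, ← sum_add_distrib]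
  gcongr with i hi i
  · exact hS i hi
  · rw [hsymm a b]
    exact htri _ _ _

theorem sum_le_of_le_on_finset [Fintype ι] (hrefl : ∀ x, d x x = 0)
    (hsymm : ∀ x y, d x y = d y x) (htri : ∀ x y z, d x z ≤ d x y + d y z) (hS : ∀ i ∈ S, d (x i) a ≤ d (x i) b)
    (hS_pos : 0 < #S) :
    ∑ i, d (x i) a ≤ (2 * (Fintype.card ι : ℝ) / #S - 1) * ∑ i, d (x i) b := by
  have hS_sum : ∑ i ∈ S, d (x i) b ≤ ∑ i, d (x i) b :=
    sum_le_univ_sum_of_nonneg fun i => nonneg_of_triangle hrefl hsymm htri _ _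
  have ht : (0 : ℝ) < #S := by exact_mod_cast hS_pos
  have h_ab : d a b ≤ 2 * (∑ i, d (x i) b) / #S := by
    rw [le_div_iff₀ ht, mul_comm]
    exact (card_mul_le_two_mul_sum x a b S hsymm htri hS).trans (by linarith)
  have h_compl : (#Sᶜ : ℝ) = Fintype.card ι - #S := by
    rw [card_compl, Nat.cast_sub (card_le_univ S)]
  have h_compl_nonneg : (0 : ℝ) ≤ #Sᶜ := Nat.cast_nonneg _
  calc ∑ i, d (x i) a ≤ ∑ i, d (x i) b + (#Sᶜ : ℝ) * d a b :=
        sum_le_sum_add_card_compl_mul x a b S hsymm htri hS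
    _ ≤ ∑ i, d (x i) b + (#Sᶜ : ℝ) * (2 * (∑ i, d (x i) b) / #S) := by gcongr
    _ = (2 * (Fintype.card ι : ℝ) / #S - 1) * ∑ i, d (x i) b := by
        rw [h_compl]
        field_simp
        ring

end PseudoMetricFunction

theorem cost_ratio_bound_general {V C : Type*} [Fintype V] {m : ℕ}
    (rank : V → C ≃ Fin m)
    (d : V ⊕ C → V ⊕ C → ℝ)
    (hrefl : ∀ x, d x x = 0)
    (hsymm : ∀ x y, d x y = d y x)
    (htri : ∀ x y z, d x z ≤ d x y + d y z)
    (hcons : ∀ (v : V) (c c' : C), Prefers rank v c c' →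
      d (Sum.inl v) (Sum.inr c) ≤ d (Sum.inl v) (Sum.inr c'))
    (w cstar : C)
    (t : ℕ) (ht : t = (Finset.univ.filter fun v => Prefers rank v w cstar).card)
    (htpos : 0 < t) :
    ∑ v : V, d (Sum.inl v) (Sum.inr w) ≤
      (2 * (Fintype.card V : ℝ) / t - 1) * ∑ v : V, d (Sum.inl v) (Sum.inr cstar) := by
  subst ht
  exact sum_le_of_le_on_finset Sum.inl _ _ _ hrefl hsymm htri
    (fun v hv => hcons v w cstar (mem_filter.mp hv).2) htpos

/-- Lemma 6 of Anshelevich et al.: for candidates `w ≠ c*` and a consistent metric `d`,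
`Σ_v d(v,w) ≤ (2n/t − 1) · Σ_v d(v,c*)` where `t > 0` is the number of voters
preferring `w` over `c*`. -/
theorem cost_ratio_bound {V C : Type*} [Fintype V] {m : ℕ}
    (rank : V → C ≃ Fin m)
    (d : V ⊕ C → V ⊕ C → ℝ)
    (hrefl : ∀ x, d x x = 0)
    (hsymm : ∀ x y, d x y = d y x)
    (htri : ∀ x y z, d x z ≤ d x y + d y z)
    (hcons : ∀ (v : V) (c c' : C), Prefers rank v c c' →
      d (Sum.inl v) (Sum.inr c) ≤ d (Sum.inl v) (Sum.inr c'))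
    (w cstar : C) (hne : w ≠ cstar)
    (t : ℕ) (ht : t = (Finset.univ.filter fun v => Prefers rank v w cstar).card)
    (htpos : 0 < t) :
    ∑ v : V, d (Sum.inl v) (Sum.inr w) ≤
      (2 * (Fintype.card V : ℝ) / t - 1) * ∑ v : V, d (Sum.inl v) (Sum.inr cstar) :=
  cost_ratio_bound_general rank d hrefl hsymm htri hcons w cstar t ht htpos
end

section
/- For every pair of voters v, v′ and every pair of candidates c, c′, if v weakly prefers c over the top choice of v′, then in any metric d consistent with the rankings, d(v,c′) + d(v′,c′) ≥ d(c,c′)/2. -/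
/-! If `v` is at least as close to `c` as to `t`, and `v'` is at least as close to `t` as to `c'`,
then going `c → v → c' → v' → t` and back bounds `d(c, c')` by twice `d(v, c') + d(v', c')`. -/

theorem le_two_mul_of_le_of_le {X : Type*} (d : X → X → ℝ)
    (hsymm : ∀ x y, d x y = d y x) (htri : ∀ x y z, d x z ≤ d x y + d y z)
    {v v' c c' t : X} (hc : d v c ≤ d v t) (ht : d v' t ≤ d v' c') :
    d c c' ≤ 2 * (d v c' + d v' c') := by
  have hvt : d v t ≤ d v c' + 2 * d v' c' :=
    calc d v t ≤ d v c' + d c' t := htri _ _ _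
      _ ≤ d v c' + (d c' v' + d v' t) := by linarith [htri c' v' t]
      _ ≤ d v c' + 2 * d v' c' := by linarith [hsymm c' v']
  calc d c c' ≤ d c v + d v c' := htri _ _ _
    _ = d v c + d v c' := by rw [hsymm c v]
    _ ≤ 2 * (d v c' + d v' c') := by linarith

theorem dist_le_of_rank_le {V C : Type*} {m : ℕ} {rank : V → C ≃ Fin m}
    {d : V ⊕ C → V ⊕ C → ℝ}
    (hcons : ∀ (v : V) (c c' : C), Prefers rank v c c' →
      d (Sum.inl v) (Sum.inr c) ≤ d (Sum.inl v) (Sum.inr c'))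
    {w : V} {a b : C} (h : rank w a ≤ rank w b) :
    d (Sum.inl w) (Sum.inr a) ≤ d (Sum.inl w) (Sum.inr b) := by
  rcases h.lt_or_eq with h | h
  · exact hcons w a b h
  · rw [(rank w).injective h]

theorem berger_lemma_general {V C : Type*} {m : ℕ}
    (rank : V → C ≃ Fin m)
    (d : V ⊕ C → V ⊕ C → ℝ)
    (hsymm : ∀ x y, d x y = d y x)
    (htri : ∀ x y z, d x z ≤ d x y + d y z)
    (hcons : ∀ (v : V) (c c' : C), Prefers rank v c c' →
      d (Sum.inl v) (Sum.inr c) ≤ d (Sum.inl v) (Sum.inr c'))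
    (v v' : V) (c c' : C)
    (t : C) (htop : ∀ c'' : C, rank v' t ≤ rank v' c'')
    (hpref : rank v c ≤ rank v t) :
    d (Sum.inl v) (Sum.inr c') + d (Sum.inl v') (Sum.inr c') ≥
      d (Sum.inr c) (Sum.inr c') / 2 := by
  have key := le_two_mul_of_le_of_le d hsymm htri
    (dist_le_of_rank_le hcons hpref) (dist_le_of_rank_le hcons (htop c'))
  linarith

/-- Lemma 3.9 of Berger et al.: if voter `v` weakly prefers `c` over the top choice `t`
of voter `v'`, then `d(v,c') + d(v',c') ≥ d(c,c')/2` for any consistent metric. -/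
theorem berger_lemma {V C : Type*} {m : ℕ}
    (rank : V → C ≃ Fin m)
    (d : V ⊕ C → V ⊕ C → ℝ)
    (hrefl : ∀ x, d x x = 0)
    (hsymm : ∀ x y, d x y = d y x)
    (htri : ∀ x y z, d x z ≤ d x y + d y z)
    (hcons : ∀ (v : V) (c c' : C), Prefers rank v c c' →
      d (Sum.inl v) (Sum.inr c) ≤ d (Sum.inl v) (Sum.inr c'))
    (v v' : V) (c c' : C)
    (t : C) (htop : ∀ c'' : C, rank v' t ≤ rank v' c'')
    (hpref : rank v c ≤ rank v t) :
    d (Sum.inl v) (Sum.inr c') + d (Sum.inl v') (Sum.inr c') ≥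
      d (Sum.inr c) (Sum.inr c') / 2 :=
  berger_lemma_general rank d hsymm htri hcons v v' c c' t htop hpref
end

section
/- Every Pareto efficient candidate has egalitarian metric distortion at most 3: if c is not Pareto-dominated by any candidate, then for every consistent metric d and every candidate c*, max_v d(v,c) ≤ 3 · max_v d(v,c*). -/
/-- `c'` Pareto-dominates `c` if every voter strictly prefers `c'` over `c`. -/
def ParetoDominates {V C : Type*} {m : ℕ} (rank : V → C ≃ Fin m) (c' c : C) : Prop :=
  ∀ v : V, Prefers rank v c' c

/-!
If `c'` does not Pareto-dominate `c`, some voter `u` ranks `c` at least as high as `c'`, so by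
consistency `d(u, c) ≤ d(u, c')`. For any voter `v` the path `v → c' → u → c` then gives
`d(v, c) ≤ d(v, c') + d(u, c') + d(u, c) ≤ 3 · max_w d(w, c')`.
-/

/-- `max_v d(v, c)`. -/
noncomputable def egalitarianCost {V C : Type*} [Fintype V] [Nonempty V]
    (d : V ⊕ C → V ⊕ C → ℝ) (c : C) : ℝ :=
  Finset.univ.sup' Finset.univ_nonempty fun v : V => d (Sum.inl v) (Sum.inr c)

theorem le_add_add_of_symm_of_triangle {α : Type*} {d : α → α → ℝ}
    (hsymm : ∀ x y, d x y = d y x) (htri : ∀ x y z, d x z ≤ d x y + d y z) (v u c s : α) :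
    d v c ≤ d v s + d u s + d u c := by
  have hvu := htri v s u
  have hvc := htri v u c
  rw [hsymm s u] at hvu
  linarith

theorem Prefers.of_not_prefers_of_ne {V C : Type*} {m : ℕ} {rank : V → C ≃ Fin m} {v : V}
    {c c' : C} (h : ¬ Prefers rank v c' c) (hne : c ≠ c') : Prefers rank v c c' :=
  lt_of_le_of_ne (not_lt.mp h) fun heq => hne ((rank v).injective heq)

section Consistent

variable {V C : Type*} {m : ℕ} {rank : V → C ≃ Fin m} {d : V ⊕ C → V ⊕ C → ℝ}

theorem exists_dist_le_of_not_paretoDominates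
    (hcons : ∀ (v : V) (c c' : C), Prefers rank v c c' →
      d (Sum.inl v) (Sum.inr c) ≤ d (Sum.inl v) (Sum.inr c'))
    {c c' : C} (h : ¬ ParetoDominates rank c' c) :
    ∃ u : V, d (Sum.inl u) (Sum.inr c) ≤ d (Sum.inl u) (Sum.inr c') := by
  obtain ⟨u, hu⟩ := not_forall.mp h
  refine ⟨u, ?_⟩
  by_cases hcc' : c = c'
  · rw [hcc']
  · exact hcons u c c' (Prefers.of_not_prefers_of_ne hu hcc')

theorem egalitarianCost_le_three_mul_of_not_paretoDominates [Fintype V] [Nonempty V]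
    (hsymm : ∀ x y, d x y = d y x) (htri : ∀ x y z, d x z ≤ d x y + d y z)
    (hcons : ∀ (v : V) (c c' : C), Prefers rank v c c' →
      d (Sum.inl v) (Sum.inr c) ≤ d (Sum.inl v) (Sum.inr c'))
    {c c' : C} (h : ¬ ParetoDominates rank c' c) :
    egalitarianCost d c ≤ 3 * egalitarianCost d c' := by
  obtain ⟨u, hu⟩ := exists_dist_le_of_not_paretoDominates hcons h
  have hle_cost : ∀ w : V, d (Sum.inl w) (Sum.inr c') ≤ egalitarianCost d c' := fun w =>
    Finset.le_sup' (fun w : V => d (Sum.inl w) (Sum.inr c')) (Finset.mem_univ w)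
  refine Finset.sup'_le _ _ fun v _ => ?_
  calc d (Sum.inl v) (Sum.inr c)
      ≤ d (Sum.inl v) (Sum.inr c') + d (Sum.inl u) (Sum.inr c') + d (Sum.inl u) (Sum.inr c) :=
        le_add_add_of_symm_of_triangle hsymm htri _ _ _ _
    _ ≤ 3 * egalitarianCost d c' := by linarith [hle_cost v, hle_cost u]

end Consistent

theorem pareto_efficient_egalitarian_general {V C : Type*} [Fintype V] [Nonempty V] {m : ℕ}
    (rank : V → C ≃ Fin m)
    (d : V ⊕ C → V ⊕ C → ℝ)
    (hsymm : ∀ x y, d x y = d y x)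
    (htri : ∀ x y z, d x z ≤ d x y + d y z)
    (hcons : ∀ (v : V) (c c' : C), Prefers rank v c c' →
      d (Sum.inl v) (Sum.inr c) ≤ d (Sum.inl v) (Sum.inr c'))
    (c : C) (heff : ∀ c' : C, ¬ ParetoDominates rank c' c)
    (cstar : C) :
    Finset.univ.sup' Finset.univ_nonempty (fun v : V => d (Sum.inl v) (Sum.inr c)) ≤
      3 * Finset.univ.sup' Finset.univ_nonempty
        (fun v : V => d (Sum.inl v) (Sum.inr cstar)) :=
  egalitarianCost_le_three_mul_of_not_paretoDominates hsymm htri hcons (heff cstar)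

/-- Every Pareto efficient candidate has egalitarian metric distortion at most 3. -/
theorem pareto_efficient_egalitarian {V C : Type*} [Fintype V] [Nonempty V] {m : ℕ}
    (rank : V → C ≃ Fin m)
    (d : V ⊕ C → V ⊕ C → ℝ)
    (hrefl : ∀ x, d x x = 0)
    (hsymm : ∀ x y, d x y = d y x)
    (htri : ∀ x y z, d x z ≤ d x y + d y z)
    (hcons : ∀ (v : V) (c c' : C), Prefers rank v c c' →
      d (Sum.inl v) (Sum.inr c) ≤ d (Sum.inl v) (Sum.inr c'))
    (c : C) (heff : ∀ c' : C, ¬ ParetoDominates rank c' c)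
    (cstar : C) :
    Finset.univ.sup' Finset.univ_nonempty (fun v : V => d (Sum.inl v) (Sum.inr c)) ≤
      3 * Finset.univ.sup' Finset.univ_nonempty
        (fun v : V => d (Sum.inl v) (Sum.inr cstar)) :=
  pareto_efficient_egalitarian_general rank d hsymm htri hcons c heff cstar
end

section
/- If a candidate c in the k-approval veto core is Pareto-dominated by a candidate c′, then the k-approval score of c′ is zero. -/
theorem HasPerfectMatching.exists_rank_le {V C : Type*} [Fintype V] {m : ℕ}
    {rank : V → C ≃ Fin m} {k : ℕ} {w x : C} (hw : HasPerfectMatching rank k w)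
    (hx : 0 < apv rank k x) : ∃ v, rank v w ≤ rank v x := by
  obtain ⟨f, hf⟩ := hw
  refine ⟨(f.symm ⟨x, ⟨0, hx⟩⟩).1, ?_⟩
  simpa only [Equiv.apply_symm_apply] using hf (f.symm ⟨x, ⟨0, hx⟩⟩)

/-- If a candidate `c` in the `k`-approval veto core is Pareto-dominated by `c'`,
then the `k`-approval score of `c'` is zero. -/
theorem dominated_core_member_apv_zero {V C : Type*} [Fintype V] {m : ℕ}
    (rank : V → C ≃ Fin m) (k : ℕ) (c c' : C)
    (hcore : HasPerfectMatching rank k c)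
    (hdom : ParetoDominates rank c' c) :
    apv rank k c' = 0 := by
  by_contra h
  obtain ⟨v, hv⟩ := hcore.exists_rank_le (Nat.pos_of_ne_zero h)
  exact (hdom v).not_ge hv
end

section
/- Every candidate in the k-approval veto core has α-percentile metric distortion at most 5 for all α ≥ k/(k+1): if w is in the k-approval veto core (equivalently, its k-domination graph has a perfect matching) and d is a metric consistent with the rankings, then cost^α_d(w) ≤ 5 · cost^α_d(c*) for every candidate c*, where cost^α_d(x) is the distance from x to its ⌊αn+1⌋-th closest voter. -/
/-- The `α`-percentile cost of candidate `x`: the distance from `x` to its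
`⌊αn+1⌋`-th closest voter. -/
noncomputable def percCost {V C : Type*} [Fintype V] (d : V ⊕ C → V ⊕ C → ℝ)
    (α : ℝ) (x : C) : ℝ :=
  ((Finset.univ.val.map fun v : V => d (Sum.inl v) (Sum.inr x)).sort (· ≤ ·)).getD
    ⌊α * (Fintype.card V)⌋₊ 0

/-!
Let `s` be the percentile cost of `c*` and `D = d(c*, w)`. If `D ≤ 4s`, the triangle inequality
moves every voter within `s` of `c*` to within `s + D ≤ 5s` of `w`. Otherwise the set `S` of
voters closer than `D/4` to `c*` contains more than `⌊αn⌋` voters. Voters of `S` are more than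
`3D/4` from `w` but less than `3D/4` from each other's top choices, so the perfect matching sends
no copy of a voter of `S` to such a top choice, while those top choices have at least `|S|`
copies in total. Hence `|S| ≤ k (n - |S|)`, i.e. `|S| ≤ kn/(k+1) ≤ αn`, a contradiction.
-/

open Finset

theorem List.Pairwise.getElem_le_iff_lt_countP {α : Type*} [LinearOrder α] {l : List α}
    (hl : l.Pairwise (· ≤ ·)) (b : α) {i : ℕ} (hi : i < l.length) :
    l[i] ≤ b ↔ i < l.countP (· ≤ b) := by
  induction l generalizing i with
  | nil => simp at hi
  | cons a t ih =>
    obtain ⟨ha, ht⟩ := List.pairwise_cons.1 hl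
    by_cases hab : a ≤ b
    · rw [List.countP_cons, if_pos (decide_eq_true hab)]
      cases i with
      | zero => simpa using hab
      | succ i => simpa using ih ht (Nat.lt_of_succ_lt_succ hi)
    · have hgt : ∀ x ∈ a :: t, b < x := fun x hx =>
        (not_le.1 hab).trans_le ((List.mem_cons.1 hx).elim (fun h => h.ge) (ha x))
      have hcount : (a :: t).countP (· ≤ b) = 0 :=
        List.countP_eq_zero.2 fun x hx => by simpa using hgt x hx
      simpa [hcount] using hgt _ (List.getElem_mem hi)

theorem percCost_le_iff {V C : Type*} [Fintype V] (d : V ⊕ C → V ⊕ C → ℝ) {α : ℝ}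
    (ht : ⌊α * Fintype.card V⌋₊ < Fintype.card V) (x : C) (b : ℝ) :
    percCost d α x ≤ b ↔ ⌊α * Fintype.card V⌋₊ < #{v | d (.inl v) (.inr x) ≤ b} := by
  set s : Multiset ℝ := univ.val.map fun v : V => d (.inl v) (.inr x)
  have hlen : (s.sort (· ≤ ·)).length = Fintype.card V := by simp [s]
  have hcount : (s.sort (· ≤ ·)).countP (· ≤ b) = #{v | d (.inl v) (.inr x) ≤ b} := by
    rw [← Multiset.coe_countP, Multiset.sort_eq, Multiset.countP_map, card_def, filter_val]
  rw [percCost, List.getD_eq_getElem _ _ (hlen ▸ ht), ← hcount]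
  exact (Multiset.pairwise_sort s _).getElem_le_iff_lt_countP b _

theorem percCost_le_add_dist {V C : Type*} [Fintype V] {d : V ⊕ C → V ⊕ C → ℝ}
    (htri : ∀ x y z, d x z ≤ d x y + d y z) {α : ℝ}
    (ht : ⌊α * Fintype.card V⌋₊ < Fintype.card V) (w c : C) :
    percCost d α w ≤ percCost d α c + d (.inr c) (.inr w) := by
  have hc := (percCost_le_iff d ht c _).1 le_rfl
  refine (percCost_le_iff d ht w _).2 (hc.trans_le (card_le_card ?_))
  exact monotone_filter_right _ fun v _ hv =>
    (htri _ _ _).trans (add_le_add_left hv _)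

theorem le_floor_mul_add {k a b : ℕ} {α : ℝ} (hα : (k : ℝ) / (k + 1) ≤ α) (h : a ≤ k * b) :
    a ≤ ⌊α * ((a + b : ℕ) : ℝ)⌋₊ := by
  refine Nat.le_floor ?_
  have hk : (0 : ℝ) < k + 1 := by positivity
  have hα' : (k : ℝ) ≤ α * (k + 1) := (div_le_iff₀ hk).1 hα
  have h' : (a : ℝ) * (k + 1) ≤ k * (a + b) := by
    have : (a : ℝ) ≤ k * b := by exact_mod_cast h
    linarith
  have hab : (0 : ℝ) ≤ a + b := by positivity
  push_cast
  nlinarith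

section Election

variable {V C : Type*} {m : ℕ} (rank : V → C ≃ Fin m)

def IsConsistent (d : V ⊕ C → V ⊕ C → ℝ) : Prop :=
  ∀ (v : V) (c c' : C), Prefers rank v c c' → d (.inl v) (.inr c) ≤ d (.inl v) (.inr c')

variable {d : V ⊕ C → V ⊕ C → ℝ}

def topChoice [NeZero m] (v : V) : C :=
  (rank v).symm 0

@[simp]
theorem rank_topChoice [NeZero m] (v : V) : rank v (topChoice rank v) = 0 :=
  (rank v).apply_symm_apply 0

theorem dist_le_of_rank_le_s15 (hcons : IsConsistent rank d)
    {v : V} {c c' : C} (h : rank v c ≤ rank v c') :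
    d (.inl v) (.inr c) ≤ d (.inl v) (.inr c') := by
  rcases h.lt_or_eq with h | h
  · exact hcons v c c' h
  · rw [(rank v).injective h]

theorem sub_lt_dist_of_dist_lt (hsymm : ∀ x y, d x y = d y x)
    (htri : ∀ x y z, d x z ≤ d x y + d y z) {v : V} {c w : C} {r : ℝ}
    (hv : d (.inl v) (.inr c) < r) :
    d (.inr c) (.inr w) - r < d (.inl v) (.inr w) := by
  linarith [htri (.inr c) (.inl v) (.inr w), hsymm (.inr c) (.inl v)]

theorem dist_topChoice_lt [NeZero m] (hsymm : ∀ x y, d x y = d y x)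
    (htri : ∀ x y z, d x z ≤ d x y + d y z)
    (hcons : IsConsistent rank d)
    {v v' : V} {c : C} {r : ℝ}
    (hv : d (.inl v) (.inr c) < r) (hv' : d (.inl v') (.inr c) < r) :
    d (.inl v) (.inr (topChoice rank v')) < 3 * r := by
  have htop : d (.inl v') (.inr (topChoice rank v')) ≤ d (.inl v') (.inr c) :=
    dist_le_of_rank_le_s15 rank hcons (by simp)
  linarith [htri (.inl v) (.inr c) (.inr (topChoice rank v')),
    htri (.inr c) (.inl v') (.inr (topChoice rank v')), hsymm (.inr c) (.inl v')]

variable [Fintype V] {k : ℕ}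

theorem card_le_sum_apv (S : Finset V) (T : Finset C)
    (hS : ∀ v ∈ S, ∃ c ∈ T, (rank v c : ℕ) < k) :
    #S ≤ ∑ c ∈ T, apv rank k c := by
  classical
  calc #S ≤ #(T.biUnion fun c => {v | (rank v c : ℕ) < k}) :=
        card_le_card fun v hv => by simpa using hS v hv
    _ ≤ ∑ c ∈ T, apv rank k c := card_biUnion_le

theorem sum_apv_le_mul_card (f : (V × Fin k) ≃ (Σ c : C, Fin (apv rank k c)))
    (T : Finset C) (U : Finset V) (hU : ∀ p, (f p).1 ∈ T → p.1 ∈ U) :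
    ∑ c ∈ T, apv rank k c ≤ k * #U := by
  calc ∑ c ∈ T, apv rank k c = #(T.sigma fun c => (univ : Finset (Fin (apv rank k c)))) := by
        simp [card_sigma]
    _ ≤ #(U ×ˢ (univ : Finset (Fin k))) :=
        card_le_card_of_injOn f.symm
          (fun x hx => by simpa using hU (f.symm x) (by simpa using (mem_sigma.1 hx).1))
          f.symm.injective.injOn
    _ = k * #U := by simp [mul_comm]

theorem card_near_le_mul_card_far [NeZero m] [DecidableEq V] (hk : 0 < k) {w c : C}
    (f : (V × Fin k) ≃ (Σ c : C, Fin (apv rank k c)))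
    (hf : ∀ p : V × Fin k, rank p.1 w ≤ rank p.1 (f p).1)
    (hsymm : ∀ x y, d x y = d y x) (htri : ∀ x y z, d x z ≤ d x y + d y z)
    (hcons : IsConsistent rank d)
    {r : ℝ} (hr : 4 * r ≤ d (.inr c) (.inr w)) :
    #{v | d (.inl v) (.inr c) < r} ≤ k * #({v | d (.inl v) (.inr c) < r} : Finset V)ᶜ := by
  classical
  set S : Finset V := {v | d (.inl v) (.inr c) < r}
  refine (card_le_sum_apv rank S (S.image (topChoice rank)) fun v hv =>
    ⟨_, mem_image_of_mem _ hv, by simpa using hk⟩).trans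
    (sum_apv_le_mul_card rank f _ _ fun p hp => ?_)
  obtain ⟨v', hv', hpv'⟩ := mem_image.1 hp
  rw [mem_compl]
  intro hpS
  have hnear := dist_topChoice_lt rank hsymm htri hcons (mem_filter.1 hpS).2 (mem_filter.1 hv').2
  have hfar := sub_lt_dist_of_dist_lt (w := w) hsymm htri (mem_filter.1 hpS).2
  have hmatched := dist_le_of_rank_le_s15 rank hcons (hf p)
  rw [hpv'] at hnear
  linarith

end Election

theorem core_percentile_distortion_general {V C : Type*} [Fintype V] [Nonempty V] {m : ℕ}
    (rank : V → C ≃ Fin m) (k : ℕ) (hk : 1 ≤ k)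
    (α : ℝ) (hα : (k : ℝ) / (k + 1) ≤ α) (hα1 : α < 1)
    (d : V ⊕ C → V ⊕ C → ℝ)
    (hsymm : ∀ x y, d x y = d y x)
    (htri : ∀ x y z, d x z ≤ d x y + d y z)
    (hcons : ∀ (v : V) (c c' : C), Prefers rank v c c' →
      d (Sum.inl v) (Sum.inr c) ≤ d (Sum.inl v) (Sum.inr c'))
    (w : C) (hcore : HasPerfectMatching rank k w)
    (cstar : C) :
    percCost d α w ≤ 5 * percCost d α cstar := by
  classical
  obtain ⟨f, hf⟩ := hcore
  have : NeZero m := ⟨(rank (Classical.arbitrary V) w).pos.ne'⟩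
  have ht : ⌊α * Fintype.card V⌋₊ < Fintype.card V :=
    (Nat.floor_lt' Fintype.card_ne_zero).2
      (mul_lt_of_lt_one_left (Nat.cast_pos.2 Fintype.card_pos) hα1)
  set s := percCost d α cstar
  by_cases hD : d (.inr cstar) (.inr w) ≤ 4 * s
  · linarith [percCost_le_add_dist htri ht w cstar]
  set D := d (.inr cstar) (.inr w)
  have hs : ⌊α * Fintype.card V⌋₊ < #{v | d (.inl v) (.inr cstar) < D / 4} :=
    ((percCost_le_iff d ht cstar s).1 le_rfl).trans_le
      (card_le_card (monotone_filter_right _ fun v _ hv => hv.trans_lt (by linarith)))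
  have hfloor := le_floor_mul_add hα
    (card_near_le_mul_card_far rank (c := cstar) (r := D / 4) hk f hf hsymm htri hcons
      (by linarith))
  rw [card_add_card_compl] at hfloor
  exact absurd hs (not_lt.2 hfloor)

/-- Every candidate in the `k`-approval veto core has `α`-percentile metric distortion
at most 5 for all `α ≥ k/(k+1)`. -/
theorem core_percentile_distortion {V C : Type*} [Fintype V] [Nonempty V] {m : ℕ}
    (rank : V → C ≃ Fin m) (k : ℕ) (hk : 1 ≤ k)
    (α : ℝ) (hα : (k : ℝ) / (k + 1) ≤ α) (hα1 : α < 1)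
    (d : V ⊕ C → V ⊕ C → ℝ)
    (hrefl : ∀ x, d x x = 0)
    (hsymm : ∀ x y, d x y = d y x)
    (htri : ∀ x y z, d x z ≤ d x y + d y z)
    (hcons : ∀ (v : V) (c c' : C), Prefers rank v c c' →
      d (Sum.inl v) (Sum.inr c) ≤ d (Sum.inl v) (Sum.inr c'))
    (w : C) (hcore : HasPerfectMatching rank k w)
    (cstar : C) :
    percCost d α w ≤ 5 * percCost d α cstar :=
  core_percentile_distortion_general rank k hk α hα hα1 d hsymm htri hcons w hcore cstar
end

section
/- For every α ∈ [1/2, k/(k+1)) with k ≥ 2, there exists an election in which the candidate c* optimal under some consistent metric has α-percentile cost 0 while every candidate in the k-approval veto core has α-percentile cost 1; hence the α-percentile distortion of the k-approval veto core is unbounded. Concretely: with k+1 candidates c_1,…,c_k,c* and n voters (n odd, αn not an integer, ⌈αn⌉ < nk/(k+1)), partition voters into T of size n−⌈αn⌉ ranking c* last and T̄ of size ⌈αn⌉ ranking c* first; then c* is k-blocked by T with witness set {c_1,…,c_k}, so the k-approval veto core is contained in {c_1,…,c_k}, and under the metric where d(v,c*)=1, d(v,c_i)=0 for v∈T and d(v,c*)=0,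 d(v,c_i)=1 for v∈T̄, we have cost^α(c*)=0 and cost^α(c_i)=1 for all i. -/
/-!
Let `t = ⌊αn⌋` and split the `n` voters into a front bloc of `t + 1` voters, who rank `c*` first,
and a back bloc of `n - t - 1` voters, who rank `c*` last. Put the front bloc and `c*` at the
point `1` of the line and everything else at `0`. The front bloc has more than `t` voters, so
`c*` has percentile cost `0`; since `α ≥ 1/2`, the back bloc has at most `t` voters, so every
other candidate has cost `1`. Finally `(k + 1)(t + 1) < kn` for `n` large, which is exactly the
condition for the back bloc to `k`-block `c*` with all other candidates as witnesses.
-/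

open Finset

section Percentile

variable {V : Type*} [Fintype V]

lemma Multiset.map_ite_univ_eq_replicate_add {β : Type*} (p : V → Prop) [DecidablePred p]
    (a b : β) :
    univ.val.map (fun v => if p v then a else b) =
      Multiset.replicate #{v | p v} a + Multiset.replicate #{v | ¬ p v} b := by
  rw [← Multiset.filter_add_not p univ.val, Multiset.map_add]
  congr 1 <;> rw [Multiset.eq_replicate] <;> exact ⟨by simp [card_def], by simp_all⟩

lemma Multiset.sort_replicate_add_replicate {β : Type*} [LinearOrder β] {a b : β} (hab : a ≤ b)
    (i j : ℕ) :
    (Multiset.replicate i a + Multiset.replicate j b).sort (· ≤ ·) =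
      List.replicate i a ++ List.replicate j b := by
  rw [← Multiset.coe_replicate, ← Multiset.coe_replicate, Multiset.coe_add, Multiset.coe_sort]
  refine List.mergeSort_eq_self _ ?_
  simp [List.pairwise_append, List.pairwise_replicate, hab]

lemma percCost_of_two_valued {C : Type*} (d : V ⊕ C → V ⊕ C → ℝ) (α : ℝ) (x : C)
    (p : V → Prop) [DecidablePred p] {a b : ℝ} (hab : a ≤ b)
    (hd : ∀ v, d (.inl v) (.inr x) = if p v then a else b)
    (hα : ⌊α * Fintype.card V⌋₊ < Fintype.card V) :
    percCost d α x = if ⌊α * Fintype.card V⌋₊ < #{v | p v} then a else b := by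
  have hcard : #{v | p v} + #{v | ¬ p v} = Fintype.card V :=
    card_filter_add_card_filter_not p
  simp only [percCost, hd, Multiset.map_ite_univ_eq_replicate_add,
    Multiset.sort_replicate_add_replicate hab]
  split_ifs with h
  · rw [List.getD_append _ _ _ _ (by simpa), List.getD_replicate (x := a) h]
  · rw [List.getD_append_right _ _ _ _ (by simpa using h), List.length_replicate,
      List.getD_replicate (x := b) (by omega)]

end Percentile

section Blocking

variable {V C : Type*} [Fintype V] [Fintype C] {m : ℕ}

lemma sum_apv (rank : V → C ≃ Fin m) {k : ℕ} (hk : k ≤ m) :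
    ∑ c, apv rank k c = Fintype.card V * k := by
  have hballot : ∀ v, ∑ c, (if ((rank v c : Fin m) : ℕ) < k then 1 else 0) = k := fun v => by
    rw [Equiv.sum_comp (rank v) fun j : Fin m => if (j : ℕ) < k then 1 else 0, ← card_filter,
      Fin.card_filter_val_lt, min_eq_right hk]
  simp only [apv, card_filter]
  rw [sum_comm, sum_congr rfl fun v _ => hballot v, sum_const, card_univ, smul_eq_mul]

lemma kBlocks_univ_erase [DecidableEq C] (rank : V → C ≃ Fin m) {k : ℕ} (hk : k ≤ m)
    {T : Finset V} {w : C} (hpref : ∀ v ∈ T, ∀ c ≠ w, Prefers rank v c w)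
    (hapv : apv rank k w < k * #T) :
    KBlocks rank k T (univ.erase w) w := by
  refine ⟨fun v hv c hc => hpref v hv c (ne_of_mem_erase hc), ?_⟩
  set n := Fintype.card V
  have hT : 0 < #T := by nlinarith
  have hk0 : (0 : ℚ) < k := by exact_mod_cast (by nlinarith : 0 < k)
  have hn : (0 : ℚ) < n := by exact_mod_cast hT.trans_le (card_le_univ T)
  have hsum : ∑ c ∈ univ.erase w, (apv rank k c : ℚ) = n * k - apv rank k w := by
    rw [eq_sub_iff_add_eq]
    exact_mod_cast (sum_erase_add _ _ (mem_univ w)).trans (sum_apv rank hk)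
  have hapvQ : (apv rank k w : ℚ) < k * #T := by exact_mod_cast hapv
  rw [hsum, gt_iff_lt, show (1 : ℚ) - (n * k - apv rank k w) / (n * k) = apv rank k w / (n * k) by
    field_simp; ring, div_lt_div_iff₀ (by positivity) hn]
  nlinarith

end Blocking

lemma Fin.card_filter_not_val_lt (n s : ℕ) : #{v : Fin n | ¬ v.val < s} = n - s := by
  have := card_filter_add_card_filter_not (s := (univ : Finset (Fin n))) fun v => v.val < s
  rw [Fin.card_filter_val_lt, card_univ, Fintype.card_fin] at this
  omega

namespace TwoBloc

variable {n k : ℕ} (s : ℕ)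

/-- `Fin.last k` plays `c*`: the first `s` voters swap it to the top, the others keep it last. -/
def rank : Fin n → Fin (k + 1) ≃ Fin (k + 1) :=
  fun v => if v.val < s then Equiv.swap (Fin.last k) 0 else Equiv.refl _

def position : Fin n ⊕ Fin (k + 1) → ℝ :=
  Sum.elim (fun v => if v.val < s then 1 else 0) fun c => if c = Fin.last k then 1 else 0

def pdist (a b : Fin n ⊕ Fin (k + 1)) : ℝ :=
  |position s a - position s b|

variable {s}

lemma rank_apply_last_of_lt {v : Fin n} (hv : v.val < s) : rank s v (Fin.last k) = 0 := by
  simp [rank, hv]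

lemma rank_of_not_lt {v : Fin n} (hv : ¬ v.val < s) : rank (k := k) s v = Equiv.refl _ := by
  simp [rank, hv]

lemma pdist_inl_inr_last (v : Fin n) :
    pdist s (.inl v) (.inr (Fin.last k)) = if v.val < s then 0 else 1 := by
  by_cases hv : v.val < s <;> simp [pdist, position, hv]

lemma pdist_inl_inr_of_ne {c : Fin (k + 1)} (hc : c ≠ Fin.last k) (v : Fin n) :
    pdist s (.inl v) (.inr c) = if ¬ v.val < s then 0 else 1 := by
  by_cases hv : v.val < s <;> simp [pdist, position, hv, hc]

lemma pdist_le_of_prefers {v : Fin n} {c c' : Fin (k + 1)} (h : Prefers (rank s) v c c') :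
    pdist s (.inl v) (.inr c) ≤ pdist s (.inl v) (.inr c') := by
  by_cases hv : v.val < s
  · have hc' : c' ≠ Fin.last k := by
      rintro rfl
      rw [Prefers, rank_apply_last_of_lt hv] at h
      exact Fin.not_lt_zero _ h
    by_cases hc : c = Fin.last k
    · rw [hc, pdist_inl_inr_last, if_pos hv]
      exact abs_nonneg _
    · rw [pdist_inl_inr_of_ne hc, pdist_inl_inr_of_ne hc']
  · have hc : c ≠ Fin.last k := by
      rintro rfl
      rw [Prefers, rank_of_not_lt hv] at h
      exact (Fin.le_last _).not_gt h
    rw [pdist_inl_inr_of_ne hc, if_pos hv]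
    exact abs_nonneg _

lemma apv_last (hk : 0 < k) (hs : s ≤ n) : apv (rank (n := n) s) k (Fin.last k) = s := by
  have hfront : (univ.filter fun v : Fin n => (rank s v (Fin.last k) : ℕ) < k) =
      univ.filter fun v => v.val < s := by
    refine filter_congr fun v _ => ?_
    by_cases hv : v.val < s
    · simp [rank_apply_last_of_lt hv, hv, hk]
    · simp [rank_of_not_lt hv, hv]
  rw [apv, hfront, Fin.card_filter_val_lt, min_eq_right hs]

lemma kBlocks_last (h : (k + 1) * s < k * n) :
    KBlocks (rank s) k {v : Fin n | ¬ v.val < s} (univ.erase (Fin.last k)) (Fin.last k) := by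
  have hk : 0 < k := Nat.pos_of_ne_zero fun hk => by simp [hk] at h
  have hs : s ≤ n := by nlinarith
  refine kBlocks_univ_erase _ k.le_succ (fun v hv c hc => ?_) ?_
  · rw [mem_filter] at hv
    rw [Prefers, rank_of_not_lt hv.2]
    exact Fin.lt_last_iff_ne_last.2 hc
  · rw [apv_last hk hs, Fin.card_filter_not_val_lt, Nat.mul_sub]
    rw [add_one_mul] at h
    omega

end TwoBloc

lemma exists_floor_mul_add_one_lt {α β : ℝ} (hα : 0 ≤ α) (hαβ : α < β) :
    ∃ n : ℕ, (⌊α * n⌋₊ + 1 : ℝ) < β * n := by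
  obtain ⟨n, hn⟩ := exists_nat_gt (1 / (β - α))
  rw [div_lt_iff₀ (sub_pos.2 hαβ)] at hn
  exact ⟨n, by linarith [Nat.floor_le (mul_nonneg hα n.cast_nonneg)]⟩

lemma le_two_mul_floor_mul_add_one {α : ℝ} (hα : 1 / 2 ≤ α) (n : ℕ) :
    n ≤ 2 * ⌊α * n⌋₊ + 1 := by
  have hfloor := Nat.lt_floor_add_one (α * n)
  have : (n : ℝ) < 2 * ⌊α * n⌋₊ + 2 := by nlinarith [n.cast_nonneg (α := ℝ)]
  have : n < 2 * ⌊α * n⌋₊ + 2 := by exact_mod_cast this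
  omega

theorem core_percentile_unbounded_general (k : ℕ)
    (α : ℝ) (hα1 : 1 / 2 ≤ α) (hα2 : α < (k : ℝ) / (k + 1)) :
    ∃ (n : ℕ) (_ : 0 < n) (rank : Fin n → Fin (k + 1) ≃ Fin (k + 1))
      (d : Fin n ⊕ Fin (k + 1) → Fin n ⊕ Fin (k + 1) → ℝ),
      (∀ x, d x x = 0) ∧
      (∀ x y, d x y = d y x) ∧
      (∀ x y z, d x z ≤ d x y + d y z) ∧
      (∀ (v : Fin n) (c c' : Fin (k + 1)), Prefers rank v c c' →
        d (Sum.inl v) (Sum.inr c) ≤ d (Sum.inl v) (Sum.inr c')) ∧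
      ∃ cstar : Fin (k + 1),
        percCost d α cstar = 0 ∧
        ∀ w : Fin (k + 1),
          (∀ (T : Finset (Fin n)) (S : Finset (Fin (k + 1))), ¬ KBlocks rank k T S w) →
          percCost d α w = 1 := by
  obtain ⟨n, hn⟩ := exists_floor_mul_add_one_lt (by linarith) hα2
  set t := ⌊α * n⌋₊
  have hks : (k + 1) * (t + 1) < k * n := by
    rw [div_mul_eq_mul_div, lt_div_iff₀ (by positivity)] at hn
    exact_mod_cast (by linarith : ((k : ℝ) + 1) * (t + 1) < k * n)
  have htn : t < n := by nlinarith
  have hhalf := le_two_mul_floor_mul_add_one hα1 n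
  have hfloor : ⌊α * Fintype.card (Fin n)⌋₊ < Fintype.card (Fin n) := by simpa using htn
  refine ⟨n, by omega, TwoBloc.rank (t + 1), TwoBloc.pdist (t + 1), fun _ => by simp [TwoBloc.pdist],
    fun _ _ => abs_sub_comm _ _, fun _ _ _ => abs_sub_le _ _ _,
    fun _ _ _ => TwoBloc.pdist_le_of_prefers, Fin.last k, ?_, fun w hw => ?_⟩
  · rw [percCost_of_two_valued _ _ _ _ zero_le_one TwoBloc.pdist_inl_inr_last hfloor,
      Fin.card_filter_val_lt, Fintype.card_fin, if_pos (by omega)]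
  · have hw : w ≠ Fin.last k := by
      rintro rfl
      exact hw _ _ (TwoBloc.kBlocks_last hks)
    rw [percCost_of_two_valued _ _ _ _ zero_le_one (TwoBloc.pdist_inl_inr_of_ne hw) hfloor,
      Fin.card_filter_not_val_lt, Fintype.card_fin, if_neg (by omega)]

/-- For every `α ∈ [1/2, k/(k+1))` with `k ≥ 2`, there is an election and a consistent
pseudometric under which some candidate `c*` has `α`-percentile cost 0 while every
candidate of the `k`-approval veto core has `α`-percentile cost 1; hence the
`α`-percentile distortion of the `k`-approval veto core is unbounded. -/
theorem core_percentile_unbounded (k : ℕ) (hk : 2 ≤ k)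
    (α : ℝ) (hα1 : 1 / 2 ≤ α) (hα2 : α < (k : ℝ) / (k + 1)) :
    ∃ (n : ℕ) (_ : 0 < n) (rank : Fin n → Fin (k + 1) ≃ Fin (k + 1))
      (d : Fin n ⊕ Fin (k + 1) → Fin n ⊕ Fin (k + 1) → ℝ),
      (∀ x, d x x = 0) ∧
      (∀ x y, d x y = d y x) ∧
      (∀ x y z, d x z ≤ d x y + d y z) ∧
      (∀ (v : Fin n) (c c' : Fin (k + 1)), Prefers rank v c c' →
        d (Sum.inl v) (Sum.inr c) ≤ d (Sum.inl v) (Sum.inr c')) ∧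
      ∃ cstar : Fin (k + 1),
        percCost d α cstar = 0 ∧
        ∀ w : Fin (k + 1),
          (∀ (T : Finset (Fin n)) (S : Finset (Fin (k + 1))), ¬ KBlocks rank k T S w) →
          percCost d α w = 1 :=
  core_percentile_unbounded_general k α hα1 hα2
end

section
/- In the election with k+1 voters v_1,…,v_{k+1} and candidates A ∪ B where A = {c_1,…,c_{k+1}}, B = {c_{k+2},…,c_m} (k < m), every voter ranks all of A above all of B, and v_i ranks c_i last within A, every candidate in A belongs to the k-approval veto core. -/
/-!
A `k`-blocking coalition `T` with witness set `S` needs `∑_{c ∈ S} apv c > k · (n - |T|)`.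
Assign to each voter `v_i` its bottom candidate `c_i` within `A` (this is the perfect matching
of the `k`-domination graph): `v_i` weakly prefers every `a ∈ A` over `c_i`, so no member of `T`
is assigned to a candidate of `S`, while `apv c ≤ k · #(voters assigned to c)` for every `c`
(`c_i` is approved by everybody but `v_i`, candidates of `B` by nobody). Summing over `S` gives
`∑_{c ∈ S} apv c ≤ k · (n - |T|)`.
-/

open Finset

section Assignment

variable {V C : Type*} {m : ℕ} (rank : V → C ≃ Fin m)

lemma card_le_rank_of_forall_prefers {v : V} {c : C} {s : Finset C}
    (hs : ∀ x ∈ s, Prefers rank v x c) : #s ≤ rank v c :=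
  calc #s = #(s.map (rank v).toEmbedding) := (card_map _).symm
    _ ≤ #(Iio (rank v c)) := card_le_card fun y hy => by
        obtain ⟨x, hx, rfl⟩ := mem_map.1 hy
        exact mem_Iio.2 (hs x hx)
    _ = rank v c := Fin.card_Iio _

variable [Fintype V] {k : ℕ}

lemma not_kBlocks_of_sum_apv_le {T : Finset V} {S : Finset C} {w : C}
    (hsum : ∑ c ∈ S, apv rank k c ≤ k * (Fintype.card V - #T)) : ¬ KBlocks rank k T S w := by
  rintro ⟨-, hgt⟩
  have hT : #T ≤ Fintype.card V := card_le_univ T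
  have hsumQ : (∑ c ∈ S, (apv rank k c : ℚ)) ≤ k * (Fintype.card V - #T) := by
    have := (Nat.cast_le (α := ℚ)).2 hsum
    push_cast [hT] at this
    exact this
  have hTQ : (#T : ℚ) ≤ Fintype.card V := by exact_mod_cast hT
  rcases Nat.eq_zero_or_pos (Fintype.card V * k) with hzero | hpos
  -- `x / 0 = 0` turns the blocking condition into `|T| / n > 1`
  · have hzeroQ : (Fintype.card V * k : ℚ) = 0 := by exact_mod_cast hzero
    rw [hzeroQ, div_zero, sub_zero] at hgt
    exact (div_le_one_of_le₀ hTQ (Nat.cast_nonneg _)).not_gt hgt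
  · have hposQ : (0 : ℚ) < Fintype.card V * k := by exact_mod_cast hpos
    have hnQ : (0 : ℚ) < Fintype.card V := pos_of_mul_pos_left hposQ (Nat.cast_nonneg _)
    have hfrac : (∑ c ∈ S, (apv rank k c : ℚ)) / (Fintype.card V * k)
        ≤ (Fintype.card V - #T) / Fintype.card V := by
      rw [div_le_div_iff₀ hposQ hnQ]
      nlinarith
    rw [sub_div, div_self hnQ.ne'] at hfrac
    linarith

lemma not_kBlocks_of_assignment [DecidableEq C] (w : C) (f : V → C)
    (hf : ∀ v, ¬ Prefers rank v (f v) w) (hapv : ∀ c, apv rank k c ≤ k * #{v | f v = c})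
    (T : Finset V) (S : Finset C) : ¬ KBlocks rank k T S w := by
  classical
  intro hblock
  refine not_kBlocks_of_sum_apv_le rank ?_ hblock
  have hassigned : ({v | f v ∈ S} : Finset V) ⊆ Tᶜ := fun v hv =>
    mem_compl.2 fun hvT => hf v (hblock.1 v hvT _ (mem_filter.1 hv).2)
  calc ∑ c ∈ S, apv rank k c ≤ ∑ c ∈ S, k * #{v | f v = c} := sum_le_sum fun c _ => hapv c
    _ = k * #{v | f v ∈ S} := by rw [← mul_sum, sum_card_fiberwise_eq_card_filter]
    _ ≤ k * (Fintype.card V - #T) := by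
        rw [← card_compl]
        exact Nat.mul_le_mul_left k (card_le_card hassigned)

end Assignment

section Election

variable {k m : ℕ} {rank : Fin (k + 1) → Fin m ≃ Fin m}

lemma apv_eq_zero_of_le (hkm : k < m)
    (hAB : ∀ (v : Fin (k + 1)) (a b : Fin m), a.val < k + 1 → k + 1 ≤ b.val → Prefers rank v a b)
    {b : Fin m} (hb : k + 1 ≤ b.val) : apv rank k b = 0 := by
  rw [apv, card_eq_zero, filter_eq_empty_iff]
  intro v _
  have hA : #(univ.map (Fin.castLEEmb hkm)) ≤ rank v b :=
    card_le_rank_of_forall_prefers rank fun x hx => by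
      obtain ⟨i, -, rfl⟩ := mem_map.1 hx
      exact hAB v _ b i.isLt hb
  simp only [card_map, card_univ, Fintype.card_fin] at hA
  omega

lemma apv_castLE_le (hkm : k < m)
    (hbot : ∀ (i : Fin (k + 1)) (a : Fin m), a.val < k + 1 → a.val ≠ i.val →
      Prefers rank i a (Fin.castLE hkm i))
    (i : Fin (k + 1)) : apv rank k (Fin.castLE hkm i) ≤ k := by
  have hbottom : #((univ.erase i).map (Fin.castLEEmb hkm)) ≤ rank i (Fin.castLE hkm i) :=
    card_le_rank_of_forall_prefers rank fun x hx => by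
      obtain ⟨j, hj, rfl⟩ := mem_map.1 hx
      exact hbot i _ j.isLt (Fin.val_ne_of_ne (ne_of_mem_erase hj))
  simp only [card_map, card_erase_of_mem (mem_univ i), card_univ, Fintype.card_fin,
    add_tsub_cancel_right] at hbottom
  calc apv rank k (Fin.castLE hkm i) ≤ #(univ.erase i) :=
        card_le_card fun v hv => mem_erase.2
          ⟨by rintro rfl; exact (mem_filter.1 hv).2.not_ge hbottom, mem_univ v⟩
    _ = k := by simp

end Election

/-- In the election with `k+1` voters and candidates `A ∪ B`, where
`A = {c_0, …, c_k}` (the candidates of index `< k+1`), every voter ranks all of `A`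
above all of `B`, and voter `v_i` ranks `c_i` last within `A`, every candidate of `A`
belongs to the `k`-approval veto core. -/
theorem A_subset_core (k m : ℕ) (hkm : k < m)
    (rank : Fin (k + 1) → Fin m ≃ Fin m)
    (hAB : ∀ (v : Fin (k + 1)) (a b : Fin m), a.val < k + 1 → k + 1 ≤ b.val →
      Prefers rank v a b)
    (hbot : ∀ (i : Fin (k + 1)) (a : Fin m), a.val < k + 1 → a.val ≠ i.val →
      Prefers rank i a ⟨i.val, lt_of_lt_of_le i.isLt (by omega)⟩)
    (a : Fin m) (ha : a.val < k + 1) :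
    ∀ (T : Finset (Fin (k + 1))) (S : Finset (Fin m)), ¬ KBlocks rank k T S a := by
  have hbottom : ∀ i, ¬ Prefers rank i (Fin.castLE hkm i) a := fun i hi => by
    by_cases hai : a.val = i.val
    · rw [show a = Fin.castLE hkm i from Fin.ext hai] at hi
      exact lt_irrefl _ hi
    · exact lt_asymm hi (hbot i a ha hai)
  have hapv : ∀ c, apv rank k c ≤ k * #{i | Fin.castLE hkm i = c} := fun c => by
    rcases lt_or_ge c.val (k + 1) with hc | hc
    · obtain ⟨i, rfl⟩ : ∃ i, Fin.castLE hkm i = c := ⟨⟨c, hc⟩, rfl⟩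
      simpa [Fin.castLE_inj, filter_eq'] using apv_castLE_le hkm hbot i
    · simp [apv_eq_zero_of_le hkm hAB hc]
  exact not_kBlocks_of_assignment rank a _ hbottom hapv
end

section
/- Let α ∈ [1/2, 1) and let m satisfy m − ⌊αm⌋ = 2. In the cyclic election with m candidates c_1,…,c_m and m voters where voter v_i ranks c_i ≻ c_{i+1} ≻ ⋯ ≻ c_m ≻ c_1 ≻ ⋯ ≻ c_{i−1}, the distance table d(v_1,c_j)=10+δ(j−1); d(v_2,c_1)=5; d(v_i,c_j)=1+(j−1)δ for 2 ≤ i ≤ j; d(v_i,c_j)=3+(j−1)δ for 3 ≤ i, j < i (with 0 < δ < 1/m) defines a metric consistent with the rankings, and under it cost^α(c_m) = 1+(m−1)δ while cost^α(c_1) ≥ 5, where cost^α(x) is the distance from x to its ⌊αm+1⌋-th closest voter. -/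
/-- The `α`-percentile cost of candidate `j`: the distance from `j` to its
`⌊αm+1⌋`-th closest voter (index `⌊αm⌋` in the sorted list of voter distances),
for an election with `m` voters and candidates indexed by `Fin m`. -/
noncomputable def pcost (m : ℕ) (d : Fin m → Fin m → ℝ) (α : ℝ) (j : Fin m) : ℝ :=
  ((Finset.univ.val.map fun i : Fin m => d i j).sort (· ≤ ·)).getD ⌊α * m⌋₊ 0

/-! Column `j` of the table lies between `1 + δ j` and `3 + δ j`, except in row `0`, which is
shifted up by `9`, and at the entry `d(v_2, c_1) = 5`; this gives the four-point inequality.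
Because `δ j ≤ 2`, each row increases along the voter's cyclic ranking. The last column is
`10 + (m-1)δ` followed by `m - 1` copies of `1 + (m-1)δ`, and column `c_1` is `10, 5, 3, …, 3`,
so their `(m-1)`-th smallest entries are `1 + (m-1)δ` and `5`. -/

theorem Multiset.sort_replicate_add {α : Type*} [LinearOrder α] (n : ℕ) {a : α}
    {s : Multiset α} (h : ∀ b ∈ s, a ≤ b) :
    (Multiset.replicate n a + s).sort (· ≤ ·) = List.replicate n a ++ s.sort (· ≤ ·) := by
  induction n with
  | zero => simp
  | succ n ih =>
    rw [Multiset.replicate_succ, Multiset.cons_add, Multiset.sort_cons, ih,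
      List.replicate_succ, List.cons_append]
    intro b hb
    rcases Multiset.mem_add.mp hb with hb | hb
    · exact (Multiset.eq_of_mem_replicate hb).ge
    · exact h b hb

theorem Nat.add_sub_mod_eq_ite {a b m : ℕ} (ha : a < m) (hb : b < m) :
    (a + m - b) % m = if b ≤ a then a - b else a + m - b := by
  split_ifs with hba
  · rw [show a + m - b = a - b + m by omega, Nat.add_mod_right, Nat.mod_eq_of_lt (by omega)]
  · exact Nat.mod_eq_of_lt (by omega)

-- Voter `v_{i+1}` and candidate `c_{j+1}` of the paper are `i` and `j` here.
def cyclicDist {m : ℕ} (δ : ℝ) (i j : Fin m) : ℝ :=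
  if i.val = 0 then 10 + δ * j.val
  else if i.val = 1 ∧ j.val = 0 then 5
  else if i.val ≤ j.val then 1 + δ * j.val
  else 3 + δ * j.val

section cyclicDist

variable {m : ℕ} (δ : ℝ)

theorem cyclicDist_of_val_eq_zero {i : Fin m} (hi : i.val = 0) (j : Fin m) :
    cyclicDist δ i j = 10 + δ * j := by
  simp [cyclicDist, hi]

theorem cyclicDist_of_val_eq_one_zero {i j : Fin m} (hi : i.val = 1) (hj : j.val = 0) :
    cyclicDist δ i j = 5 := by
  simp [cyclicDist, hi, hj]

theorem one_add_mul_le_cyclicDist (i j : Fin m) : 1 + δ * j ≤ cyclicDist δ i j := by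
  unfold cyclicDist
  split_ifs with _ h <;> (try simp only [h.2]) <;> norm_num

theorem three_le_cyclicDist (i : Fin m) {j : Fin m} (hj : j.val = 0) : 3 ≤ cyclicDist δ i j := by
  simp only [cyclicDist, hj, Nat.cast_zero, mul_zero, add_zero]
  split_ifs <;> first | omega | norm_num

theorem cyclicDist_le_three_add {i : Fin m} (hi : i.val ≠ 0) {j : Fin m}
    (hij : ¬(i.val = 1 ∧ j.val = 0)) : cyclicDist δ i j ≤ 3 + δ * j := by
  simp only [cyclicDist, hi, hij, if_false]
  split_ifs <;> linarith

variable {δ}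

theorem cyclicDist_four_point (hδ : 0 ≤ δ) (i i' j j' : Fin m) :
    cyclicDist δ i j ≤ cyclicDist δ i' j + cyclicDist δ i' j' + cyclicDist δ i j' := by
  have h₁ := one_add_mul_le_cyclicDist δ i' j
  have h₂ := one_add_mul_le_cyclicDist δ i' j'
  have h₃ := one_add_mul_le_cyclicDist δ i j'
  have hj' : 0 ≤ δ * j' := by positivity
  by_cases hi : i.val = 0
  · rw [cyclicDist_of_val_eq_zero δ hi, cyclicDist_of_val_eq_zero δ hi]
    linarith
  by_cases hij : i.val = 1 ∧ j.val = 0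
  · rw [cyclicDist_of_val_eq_one_zero δ hij.1 hij.2]
    linarith [three_le_cyclicDist δ i' hij.2]
  · linarith [cyclicDist_le_three_add δ hi hij]

theorem cyclicDist_le_of_mod_lt (hδ : 0 ≤ δ) (hδm : δ * m ≤ 2) {i j j' : Fin m}
    (h : (j.val + m - i.val) % m < (j'.val + m - i.val) % m) :
    cyclicDist δ i j ≤ cyclicDist δ i j' := by
  rw [Nat.add_sub_mod_eq_ite j.isLt i.isLt, Nat.add_sub_mod_eq_ite j'.isLt i.isLt] at h
  have hδj : δ * j ≤ 2 := le_trans (by gcongr; exact_mod_cast j.isLt.le) hδm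
  have hδj' : 0 ≤ δ * j' := by positivity
  have hmono : j.val ≤ j'.val → δ * j ≤ δ * j' := fun hjj' => by gcongr
  unfold cyclicDist
  split_ifs at h ⊢ <;> first | omega | linarith [hmono (by omega)] | linarith

end cyclicDist

theorem pcost_cyclicDist_last (δ α : ℝ) {n : ℕ} (hα : ⌊α * ((n + 2 : ℕ) : ℝ)⌋₊ = n) :
    pcost (n + 2) (cyclicDist δ) α (Fin.last (n + 1)) = 1 + δ * (n + 1) := by
  have hzero : cyclicDist δ 0 (Fin.last (n + 1)) = 10 + δ * (n + 1) := by simp [cyclicDist]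
  have hsucc (i : Fin (n + 1)) : cyclicDist δ i.succ (Fin.last (n + 1)) = 1 + δ * (n + 1) := by
    simp [cyclicDist, i.is_le]
  have hcol : (Finset.univ.val.map fun i => cyclicDist δ i (Fin.last (n + 1))) =
      Multiset.replicate (n + 1) (1 + δ * (n + 1)) + {10 + δ * (n + 1)} := by
    rw [Fin.univ_val_map, List.ofFn_succ]
    simp only [hzero, hsucc, List.ofFn_const, ← Multiset.cons_coe, Multiset.coe_replicate,
      ← Multiset.singleton_add]
    abel
  rw [pcost, hα, hcol, Multiset.sort_replicate_add _ (by simp), Multiset.sort_singleton,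
    List.getD_append _ _ _ _ (by simp), List.getD_replicate _ (by omega)]

theorem pcost_cyclicDist_zero (δ α : ℝ) {n : ℕ} (hα : ⌊α * ((n + 2 : ℕ) : ℝ)⌋₊ = n) :
    pcost (n + 2) (cyclicDist δ) α 0 = 5 := by
  have hzero : cyclicDist δ 0 (0 : Fin (n + 2)) = 10 := by simp [cyclicDist]
  have hone : cyclicDist δ 1 (0 : Fin (n + 2)) = 5 := by simp [cyclicDist]
  have hsucc (i : Fin n) : cyclicDist δ i.succ.succ 0 = 3 := by simp [cyclicDist]
  have hcol : (Finset.univ.val.map fun i : Fin (n + 2) => cyclicDist δ i 0) =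
      Multiset.replicate n 3 + (5 ::ₘ {10}) := by
    rw [Fin.univ_val_map, List.ofFn_succ, List.ofFn_succ]
    simp only [Fin.succ_zero_eq_one, hzero, hone, hsucc, List.ofFn_const, ← Multiset.cons_coe,
      Multiset.coe_replicate, ← Multiset.singleton_add]
    abel
  rw [pcost, hα, hcol, Multiset.sort_replicate_add _ (by norm_num),
    Multiset.sort_cons _ _ _ (by norm_num), Multiset.sort_singleton,
    List.getD_append_right _ _ _ _ (by simp)]
  simp

/-- The lower-bound construction for `α`-percentile distortion: in the cyclic election
with `m` voters and `m` candidates (voter `v_i` ranks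
`c_i ≻ c_{i+1} ≻ ⋯ ≻ c_{m-1} ≻ c_0 ≻ ⋯ ≻ c_{i-1}`), the given distance table is
consistent with the rankings and satisfies the four-point triangle inequality, and
under it `cost^α(c_{m-1}) = 1 + (m-1)δ` while `cost^α(c_0) ≥ 5`. -/
theorem percentile_lower_bound_construction
    (α : ℝ)
    (m : ℕ) (hm : m - ⌊α * (m : ℝ)⌋₊ = 2)
    (δ : ℝ) (hδ0 : 0 < δ) (hδ1 : δ < 1 / m)
    (d : Fin m → Fin m → ℝ)
    (hd : ∀ i j : Fin m, d i j =
      if i.val = 0 then 10 + δ * j.val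
      else if i.val = 1 ∧ j.val = 0 then 5
      else if i.val ≤ j.val then 1 + δ * j.val
      else 3 + δ * j.val)
    (rank : Fin m → Fin m ≃ Fin m)
    (hrank : ∀ i j : Fin m, ((rank i) j : ℕ) = (j.val + m - i.val) % m) :
    (∀ (i j j' : Fin m), Prefers rank i j j' → d i j ≤ d i j') ∧
    (∀ (i i' j j' : Fin m), d i j ≤ d i' j + d i' j' + d i j') ∧
    pcost m d α ⟨m - 1, by omega⟩ = 1 + δ * ((m : ℝ) - 1) ∧
    5 ≤ pcost m d α ⟨0, by omega⟩ := by
  obtain ⟨n, rfl⟩ : ∃ n, m = n + 2 := ⟨m - 2, by omega⟩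
  obtain rfl : d = cyclicDist δ := funext₂ hd
  have hα : ⌊α * ((n + 2 : ℕ) : ℝ)⌋₊ = n := by omega
  have hδm : δ * (n + 2 : ℕ) ≤ 2 := by
    have hδm1 := (lt_div_iff₀ (by positivity)).mp hδ1
    linarith
  refine ⟨fun i j j' h => cyclicDist_le_of_mod_lt hδ0.le hδm ?_, cyclicDist_four_point hδ0.le,
    ?_, (pcost_cyclicDist_zero δ α hα).ge⟩
  · rwa [Prefers, Fin.lt_def, hrank, hrank] at h
  · rw [show (⟨n + 2 - 1, _⟩ : Fin (n + 2)) = Fin.last (n + 1) from rfl,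
      pcost_cyclicDist_last δ α hα]
    push_cast
    ring
end
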